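/- arXiv:2111.09380 — 7 statements merged into one kernel-verified Lean document; each statement's English description precedes it below -/
import Mathlib

section
/- Let V be a nonempty, closed, convex subset of EuclideanSpace ℝ n, let q ∉ V, and let p ∈ V be the metric projection of q onto V (so ‖q − p‖ = infDist q V). For every r with 0 ≤ r ≤ ‖q − p‖, the point p_r := p + (r/‖q − p‖) • (q − p) belongs to the dilated set D_r(V), satisfies ‖q − p_r‖ = ‖q − p‖ − r, this value equals infDist q (D_r(V)), and p_r is the unique closest point of D_r(V) to q (i.e., any y ∈ D_r(V) with ‖q − y‖ = infDist q (D_r(V)) equals p_r). -/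
open Metric
open scoped RealInnerProductSpace

/-- The dilated set `D_r(V)`: the Minkowski sum of `V` with the closed ball of
radius `r` centered at the origin. -/
def dilated {n : ℕ} (V : Set (EuclideanSpace ℝ (Fin n))) (r : ℝ) :
    Set (EuclideanSpace ℝ (Fin n)) :=
  {x | ∃ v ∈ V, ∃ w : EuclideanSpace ℝ (Fin n), ‖w‖ ≤ r ∧ x = v + w}

set_option maxHeartbeats 1000000 in
/-- Collinearity claim from the proof of Lemma 1: for `0 ≤ r ≤ ‖q - p‖`, the point
`p_r = p + (r/‖q - p‖) • (q - p)` lies in `D_r(V)`, is at distance `‖q - p‖ - r` from `q`,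
this distance equals `infDist q (D_r(V))`, and `p_r` is the unique closest point of
`D_r(V)` to `q`. -/
theorem projection_on_dilated_collinear {n : ℕ} (V : Set (EuclideanSpace ℝ (Fin n)))
    (hVne : V.Nonempty) (hVcl : IsClosed V) (hVconv : Convex ℝ V)
    (q p : EuclideanSpace ℝ (Fin n)) (hq : q ∉ V) (hp : p ∈ V)
    (hproj : ‖q - p‖ = infDist q V)
    (r : ℝ) (hr0 : 0 ≤ r) (hr1 : r ≤ ‖q - p‖) :
    p + (r / ‖q - p‖) • (q - p) ∈ dilated V r ∧
      ‖q - (p + (r / ‖q - p‖) • (q - p))‖ = ‖q - p‖ - r ∧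
      infDist q (dilated V r) = ‖q - p‖ - r ∧
      ∀ y ∈ dilated V r, ‖q - y‖ = infDist q (dilated V r) →
        y = p + (r / ‖q - p‖) • (q - p) := by
  have hd : (0 : ℝ) < ‖q - p‖ := by
    rw [norm_sub_pos_iff]
    rintro rfl; exact hq hp
  set d := ‖q - p‖ with hdd
  -- membership
  have hwnorm : ‖(r / d) • (q - p)‖ = r := by
    rw [norm_smul, Real.norm_eq_abs, abs_of_nonneg (div_nonneg hr0 hd.le), ← hdd,
      div_mul_cancel₀ _ hd.ne']
  have hmem : p + (r / d) • (q - p) ∈ dilated V r :=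
    ⟨p, hp, (r / d) • (q - p), le_of_eq hwnorm, rfl⟩
  -- distance
  have hrep : q - (p + (r / d) • (q - p)) = (1 - r / d) • (q - p) := by
    rw [sub_smul, one_smul]; abel
  have hdist : ‖q - (p + (r / d) • (q - p))‖ = d - r := by
    rw [hrep, norm_smul, Real.norm_eq_abs,
      abs_of_nonneg (by rw [sub_nonneg]; exact div_le_one_of_le₀ hr1 hd.le), ← hdd,
      sub_mul, one_mul, div_mul_cancel₀ _ hd.ne']
  -- lower bound
  have hqvd : ∀ v ∈ V, d ≤ ‖q - v‖ := fun v hv =>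
    hproj.trans_le ((infDist_le_dist_of_mem hv).trans_eq (dist_eq_norm q v))
  have hlb : ∀ y ∈ dilated V r, d - r ≤ ‖q - y‖ := by
    rintro y ⟨v, hv, w, hw, rfl⟩
    have h1 : d ≤ ‖q - v‖ := hqvd v hv
    have h2 : ‖q - v‖ - ‖w‖ ≤ ‖(q - v) - w‖ := norm_sub_norm_le _ _
    have h3 : q - (v + w) = (q - v) - w := by abel
    rw [h3]; linarith
  have hne : (dilated V r).Nonempty := ⟨_, hmem⟩
  have hinf : infDist q (dilated V r) = d - r := by
    apply le_antisymm
    · calc infDist q (dilated V r) ≤ dist q (p + (r / d) • (q - p)) :=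
            infDist_le_dist_of_mem hmem
        _ = d - r := by rw [dist_eq_norm, hdist]
    · by_contra hlt
      push_neg at hlt
      obtain ⟨y, hy, hylt⟩ := (infDist_lt_iff hne).1 hlt
      rw [dist_eq_norm] at hylt
      exact absurd (hlb y hy) (not_le.2 hylt)
  refine ⟨hmem, hdist, hinf, ?_⟩
  rintro y ⟨v, hv, w, hw, rfl⟩ hy
  rw [hinf] at hy
  have h3 : q - (v + w) = (q - v) - w := by abel
  rw [h3] at hy
  have h1 : d ≤ ‖q - v‖ := hqvd v hv
  have h2 : ‖q - v‖ - ‖w‖ ≤ ‖(q - v) - w‖ := norm_sub_norm_le _ _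
  have hqv : ‖q - v‖ = d := by linarith
  have hwr : ‖w‖ = r := by linarith
  -- v = p by uniqueness of projection
  have hvp : v = p := by
    have hm : (1/2 : ℝ) • p + (1/2 : ℝ) • v ∈ V :=
      hVconv hp hv (by norm_num) (by norm_num) (by norm_num)
    have hdm : d ≤ ‖q - ((1/2 : ℝ) • p + (1/2 : ℝ) • v)‖ := hqvd _ hm
    have hrep2 : q - ((1/2 : ℝ) • p + (1/2 : ℝ) • v)
        = (1/2 : ℝ) • ((q - p) + (q - v)) := by
      module
    have hpar := parallelogram_law_with_norm ℝ (q - p) (q - v)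
    have hrep3 : (q - p) - (q - v) = v - p := by abel
    rw [hrep3] at hpar
    have hnm : ‖q - ((1/2 : ℝ) • p + (1/2 : ℝ) • v)‖
        = (1/2 : ℝ) * ‖(q - p) + (q - v)‖ := by
      rw [hrep2, norm_smul, Real.norm_eq_abs]; norm_num
    rw [hnm] at hdm
    have hvp0 : ‖v - p‖ = 0 := by
      have hq1 : ‖q - v‖ * ‖q - v‖ = d * d := by rw [hqv]
      have hq2 : ‖q - p‖ * ‖q - p‖ = d * d := by rw [← hdd]
      nlinarith [norm_nonneg (v - p), norm_nonneg ((q - p) + (q - v))]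
    rw [norm_eq_zero, sub_eq_zero] at hvp0
    exact hvp0
  rw [hvp] at hy ⊢
  -- now w = (r/d) • (q - p)
  have hray : SameRay ℝ ((q - p) - w) w := by
    rw [sameRay_iff_norm_add, sub_add_cancel, hy, hwr, ← hdd]
    ring
  have hsm := hray.norm_smul_eq
  rw [hy, hwr] at hsm
  -- (d - r) • w = r • ((q - p) - w)
  have hdw : d • w = r • (q - p) := by
    have h4 : (d - r) • w + r • w = r • (q - p) := by
      rw [hsm]; module
    rw [← h4]; module
  have hwe : w = (r / d) • (q - p) := by
    have h5 : d • w = d • ((r / d) • (q - p)) := by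
      rw [hdw, smul_smul, mul_div_cancel₀ _ hd.ne']
    exact smul_right_injective _ hd.ne' h5
  rw [hwe]
end

section
/- Let V be a nonempty, closed, convex subset of EuclideanSpace ℝ n, let q ∉ V, let p ∈ V be the metric projection of q onto V, let r satisfy 0 ≤ r ≤ ‖q − p‖, and let p_r be the metric projection of q onto the dilated set D_r(V). Then for every x ∈ D_r(V) one has ⟪x − p_r, q − p⟫ ≤ 0; that is, the vector q − p is normal to D_r(V) at p_r and the hyperplane through p_r with normal q − p is a supporting hyperplane of D_r(V) at p_r. -/
open Metric
open scoped RealInnerProductSpace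

/-- Lemma 1 of the paper: the vector `q - p` (where `p = Π(q, V)`) is normal to the
dilated set `D_r(V)` at the projection `p_r = Π(q, D_r(V))`, i.e. the hyperplane through
`p_r` with normal `q - p` supports `D_r(V)` at `p_r`. -/
theorem supporting_hyperplane_of_dilated {n : ℕ} (V : Set (EuclideanSpace ℝ (Fin n)))
    (hVne : V.Nonempty) (hVcl : IsClosed V) (hVconv : Convex ℝ V)
    (q p : EuclideanSpace ℝ (Fin n)) (hq : q ∉ V) (hp : p ∈ V)
    (hproj : ‖q - p‖ = infDist q V)
    (r : ℝ) (hr0 : 0 ≤ r) (hr1 : r ≤ ‖q - p‖)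
    (pr : EuclideanSpace ℝ (Fin n)) (hprmem : pr ∈ dilated V r)
    (hprproj : ‖q - pr‖ = infDist q (dilated V r)) :
    ∀ x ∈ dilated V r, ⟪x - pr, q - p⟫ ≤ 0 := by
  set a : EuclideanSpace ℝ (Fin n) := q - p with ha
  have hqp : q ≠ p := fun h => hq (h ▸ hp)
  have hna : 0 < ‖a‖ := by simpa [ha, sub_eq_zero] using hqp
  have hinf_eq : ∀ u : EuclideanSpace ℝ (Fin n), infDist u V = ⨅ w : V, ‖u - w‖ := by
    intro u
    rw [infDist_eq_iInf]
    exact iInf_congr fun w => dist_eq_norm _ _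
  have hvar : ∀ v ∈ V, ‖q - v‖ = infDist q V → ∀ w ∈ V, ⟪q - v, w - v⟫ ≤ 0 := by
    intro v hv hmin
    rw [hinf_eq] at hmin
    exact (norm_eq_iInf_iff_real_inner_le_zero hVconv hv).mp hmin
  have hVineq : ∀ v ∈ V, ⟪q - p, v - p⟫ ≤ 0 := hvar p hp hproj
  have hlow : ∀ x ∈ dilated V r, ‖a‖ - r ≤ ‖q - x‖ := by
    rintro x ⟨v, hv, w, hw, rfl⟩
    have h1 : infDist q V ≤ ‖q - v‖ := by
      simpa [dist_eq_norm] using infDist_le_dist_of_mem hv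
    have hrw : q - (v + w) = (q - v) - w := by abel
    have h2 : ‖q - v‖ - ‖w‖ ≤ ‖q - (v + w)‖ := by
      rw [hrw]; exact norm_sub_norm_le _ _
    rw [hproj] at hna hr1 ⊢
    linarith
  have hx0mem : p + (r / ‖a‖) • a ∈ dilated V r := by
    refine ⟨p, hp, (r / ‖a‖) • a, ?_, rfl⟩
    rw [norm_smul, Real.norm_eq_abs, abs_of_nonneg (by positivity),
      div_mul_cancel₀ _ hna.ne']
  have hx0dist : ‖q - (p + (r / ‖a‖) • a)‖ = ‖a‖ - r := by
    have h : q - (p + (r / ‖a‖) • a) = (1 - r / ‖a‖) • a := by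
      rw [sub_smul, one_smul, ha]; abel
    rw [h, norm_smul, Real.norm_eq_abs, abs_of_nonneg, sub_mul, one_mul,
      div_mul_cancel₀ _ hna.ne']
    rw [sub_nonneg, div_le_one hna]; exact hr1
  have hprdist : ‖q - pr‖ = ‖a‖ - r := by
    have h1 : ‖a‖ - r ≤ ‖q - pr‖ := hlow pr hprmem
    have h2 : ‖q - pr‖ ≤ ‖a‖ - r := by
      rw [hprproj]
      calc infDist q (dilated V r) ≤ dist q (p + (r / ‖a‖) • a) :=
            infDist_le_dist_of_mem hx0mem
        _ = ‖a‖ - r := by rw [dist_eq_norm, hx0dist]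
    linarith
  obtain ⟨v, hv, w, hw, rfl⟩ := hprmem
  have hqv : infDist q V ≤ ‖q - v‖ := by
    simpa [dist_eq_norm] using infDist_le_dist_of_mem hv
  have hrw : q - (v + w) = (q - v) - w := by abel
  have htri : ‖q - v‖ - ‖w‖ ≤ ‖(q - v) - w‖ := norm_sub_norm_le _ _
  rw [hrw] at hprdist
  have hqveq : ‖q - v‖ = ‖a‖ := by linarith [htri, hprdist, hw, hproj, hqv]
  have hweq : ‖w‖ = r := by linarith [htri, hprdist, hw, hproj, hqv]
  have hvp : v = p := by
    have h1 : ⟪q - p, v - p⟫ ≤ 0 := hVineq v hv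
    have h2 : ⟪q - v, p - v⟫ ≤ 0 := hvar v hv (by rw [hqveq, hproj]) p hp
    have e3 : ⟪q - p, v - p⟫ = -⟪q - p, p - v⟫ := by
      rw [show v - p = -(p - v) from by abel, inner_neg_right]
    have e4 : ⟪q - v, p - v⟫ - ⟪q - p, p - v⟫ = ‖p - v‖ ^ 2 := by
      rw [← inner_sub_left, show (q - v) - (q - p) = p - v from by abel,
        real_inner_self_eq_norm_sq]
    have key : ‖p - v‖ ^ 2 ≤ 0 := by linarith
    have hz : ‖p - v‖ = 0 := le_antisymm (by nlinarith [norm_nonneg (p - v)]) (norm_nonneg _)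
    have := sub_eq_zero.mp (norm_eq_zero.mp hz)
    exact this.symm
  have haqv : a = q - v := by rw [ha, hvp]
  have hweq2 : w = (r / ‖a‖) • a := by
    have heq : ‖a - w‖ = ‖a‖ - ‖w‖ := by
      rw [hweq, show a - w = q - v - w from by rw [haqv]]; exact hprdist
    have hcs : ⟪a, w⟫ = ‖a‖ * ‖w‖ := by
      have hsq : ‖a - w‖ ^ 2 = (‖a‖ - ‖w‖) ^ 2 := by rw [heq]
      rw [norm_sub_sq_real] at hsq
      nlinarith
    have hkey := inner_eq_norm_mul_iff_real.mp hcs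
    rw [hweq] at hkey
    -- hkey : r • a = ‖a‖ • w
    rw [div_eq_inv_mul, ← smul_smul, hkey, smul_smul, inv_mul_cancel₀ hna.ne', one_smul]
  have hpr_eq : v + w = p + (r / ‖a‖) • a := by rw [hvp, hweq2]
  rw [hpr_eq]
  rintro x ⟨v', hv', w', hw', rfl⟩
  have hsplit : v' + w' - (p + (r / ‖a‖) • a) = (v' - p) + (w' - (r / ‖a‖) • a) := by abel
  rw [hsplit, inner_add_left]
  have h4 : ⟪w' - (r / ‖a‖) • a, a⟫ = ⟪w', a⟫ - r / ‖a‖ * ‖a‖ ^ 2 := by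
    rw [inner_sub_left, real_inner_smul_left, real_inner_self_eq_norm_sq]
  have h1 : ⟪v' - p, a⟫ ≤ 0 := by
    rw [real_inner_comm]; exact hVineq v' hv'
  have h2 : ⟪w', a⟫ ≤ r * ‖a‖ := by
    calc ⟪w', a⟫ ≤ ‖w'‖ * ‖a‖ := real_inner_le_norm _ _
      _ ≤ r * ‖a‖ := mul_le_mul_of_nonneg_right hw' (norm_nonneg _)
  have h3 : r / ‖a‖ * ‖a‖ ^ 2 = r * ‖a‖ := by
    field_simp
  linarith
end

section
/- Let O ⊆ ℝ² be a nonempty, compact, convex set, let m ∈ {−1, 1}, let t₀ ≤ t₁ be reals, and let x, p : ℝ → ℝ² be such that for every t ∈ [t₀, t₁]: x t ∉ O, p t ∈ O with ‖x t − p t‖ = infDist (x t) O (i.e., p t is the metric projection of x t onto O), and x has derivative (‖x t‖ / ‖x t − p t‖) • ν_m(x t − p t) at t (HasDerivAt). Then infDist (x t) O = infDist (x t₀) O for every t ∈ [t₀, t₁]; i.e., the distance of the trajectory to the obstacle is constant along the rotational vector field. -/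
open Metric
open scoped RealInnerProductSpace

/-- The rotation `ν_m` (clockwise for `m = 1`, counter-clockwise for `m = -1`):
`ν_m (w₁, w₂) = (m·w₂, −m·w₁)`. -/
noncomputable def nu (m : ℝ) (w : EuclideanSpace ℝ (Fin 2)) : EuclideanSpace ℝ (Fin 2) :=
  WithLp.toLp 2 ![m * w 1, -(m * w 0)]

lemma nu_inner_self (m : ℝ) (w : EuclideanSpace ℝ (Fin 2)) : ⟪nu m w, w⟫ = 0 := by
  simp [nu, PiLp.inner_apply, Fin.sum_univ_two, RCLike.inner_apply]
  ring

/-- Lemma 6 of the paper: along the rotational vector field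
`ẋ = (‖x‖ / ‖x - Π(x,O)‖) • ν_m (x - Π(x,O))`, the distance of the trajectory to the
compact convex obstacle `O` remains constant: the robot revolves around the obstacle. -/
theorem rotational_flow_constant_distance
    (O : Set (EuclideanSpace ℝ (Fin 2)))
    (hOne : O.Nonempty) (hOcomp : IsCompact O) (hOconv : Convex ℝ O)
    (m : ℝ) (hm : m = -1 ∨ m = 1)
    (t₀ t₁ : ℝ) (ht : t₀ ≤ t₁)
    (x p : ℝ → EuclideanSpace ℝ (Fin 2))
    (hout : ∀ t ∈ Set.Icc t₀ t₁, x t ∉ O)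
    (hmem : ∀ t ∈ Set.Icc t₀ t₁, p t ∈ O)
    (hproj : ∀ t ∈ Set.Icc t₀ t₁, ‖x t - p t‖ = infDist (x t) O)
    (hderiv : ∀ t ∈ Set.Icc t₀ t₁,
      HasDerivAt x ((‖x t‖ / ‖x t - p t‖) • nu m (x t - p t)) t) :
    ∀ t ∈ Set.Icc t₀ t₁, infDist (x t) O = infDist (x t₀) O := by
  set f : ℝ → ℝ := fun s => infDist (x s) O with hf
  -- main step: f has derivative 0 within Icc at each point
  have key : ∀ t ∈ Set.Icc t₀ t₁, HasDerivWithinAt f 0 (Set.Icc t₀ t₁) t := by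
    intro t ht'
    have hpt : p t ∈ O := hmem t ht'
    have hxne : x t - p t ≠ 0 := by
      intro h
      rw [sub_eq_zero] at h
      exact hout t ht' (h ▸ hpt)
    have hnpos : (0:ℝ) < ‖x t - p t‖ := norm_pos_iff.2 hxne
    have hvw : ⟪(‖x t‖ / ‖x t - p t‖) • nu m (x t - p t), x t - p t⟫ = 0 := by
      rw [real_inner_smul_left, nu_inner_self, mul_zero]
    have hproj' : ∀ q ∈ O, ⟪x t - p t, q - p t⟫ ≤ 0 := by
      have h1 : ‖x t - p t‖ = ⨅ q : O, ‖x t - q‖ := by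
        rw [hproj t ht', infDist_eq_iInf]
        simp only [dist_eq_norm]
      exact (norm_eq_iInf_iff_real_inner_le_zero hOconv hpt).1 h1
    set u : EuclideanSpace ℝ (Fin 2) := ‖x t - p t‖⁻¹ • (x t - p t) with hu
    have hy : HasDerivAt (fun s => x s - p t)
        ((‖x t‖ / ‖x t - p t‖) • nu m (x t - p t)) t := (hderiv t ht').sub_const _
    have hGinner : HasDerivAt (fun s => ⟪x s - p t, x s - p t⟫) 0 t := by
      have h0 : HasDerivAt (fun s => ⟪x s - p t, x s - p t⟫)
          (⟪x t - p t, (‖x t‖ / ‖x t - p t‖) • nu m (x t - p t)⟫ +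
            ⟪(‖x t‖ / ‖x t - p t‖) • nu m (x t - p t), x t - p t⟫) t :=
        hy.inner (𝕜 := ℝ) hy
      have h2 : ⟪x t - p t, (‖x t‖ / ‖x t - p t‖) • nu m (x t - p t)⟫ +
          ⟪(‖x t‖ / ‖x t - p t‖) • nu m (x t - p t), x t - p t⟫ = (0:ℝ) := by
        have hvw' : ⟪x t - p t, (‖x t‖ / ‖x t - p t‖) • nu m (x t - p t)⟫ = (0:ℝ) := by
          rw [real_inner_comm]; exact hvw
        rw [real_inner_comm (x t - p t), hvw']; ring
      exact h2 ▸ h0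
    have hGpos : ⟪x t - p t, x t - p t⟫ ≠ (0:ℝ) := by
      rw [real_inner_self_eq_norm_mul_norm]
      positivity
    have hg : HasDerivAt (fun s => ‖x s - p t‖) 0 t := by
      have hc := (Real.hasDerivAt_sqrt hGpos).comp t hGinner
      have heq : (Real.sqrt ∘ fun s => ⟪x s - p t, x s - p t⟫) = fun s => ‖x s - p t‖ := by
        funext s
        simp only [Function.comp_apply, real_inner_self_eq_norm_mul_norm,
          Real.sqrt_mul_self (norm_nonneg _)]
      rw [heq] at hc
      simpa using hc
    have hh : HasDerivAt (fun s => ⟪x s - p t, u⟫) 0 t := by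
      have h0 : HasDerivAt (fun s => ⟪x s - p t, u⟫)
          (⟪x t - p t, (0 : EuclideanSpace ℝ (Fin 2))⟫ +
            ⟪(‖x t‖ / ‖x t - p t‖) • nu m (x t - p t), u⟫) t :=
        hy.inner (𝕜 := ℝ) (hasDerivAt_const t u)
      have h2 : ⟪x t - p t, (0 : EuclideanSpace ℝ (Fin 2))⟫ +
          ⟪(‖x t‖ / ‖x t - p t‖) • nu m (x t - p t), u⟫ = (0:ℝ) := by
        rw [inner_zero_right, hu, real_inner_smul_right, hvw]; ring
      exact h2 ▸ h0
    -- set up notations for g and h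
    set g : ℝ → ℝ := fun s => ‖x s - p t‖ with hgdef
    set h : ℝ → ℝ := fun s => ⟪x s - p t, u⟫ with hhdef
    -- equalities at t
    have hft : f t = ‖x t - p t‖ := (hproj t ht').symm
    have hgt : g t = f t := hft.symm
    have hht : h t = f t := by
      show ⟪x t - p t, u⟫ = f t
      rw [hu, real_inner_smul_right, real_inner_self_eq_norm_mul_norm, hft]
      field_simp
    -- inequalities on Icc
    have hupper : ∀ s ∈ Set.Icc t₀ t₁, f s ≤ g s := by
      intro s _
      rw [hf, hgdef]
      simpa [dist_eq_norm] using infDist_le_dist_of_mem (x := x s) hpt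
    have hlower : ∀ s ∈ Set.Icc t₀ t₁, h s ≤ f s := by
      intro s hs
      have hps : p s ∈ O := hmem s hs
      have hnu : ‖u‖ = 1 := by
        rw [hu, norm_smul, norm_inv, norm_norm, inv_mul_cancel₀ (ne_of_gt hnpos)]
      have h1 : ⟪x s - p s, u⟫ ≤ f s := by
        calc ⟪x s - p s, u⟫ ≤ ‖x s - p s‖ * ‖u‖ := real_inner_le_norm _ _
          _ = f s := by rw [hnu, mul_one, hf]; exact (hproj s hs)
      have h2 : ⟪p s - p t, u⟫ ≤ 0 := by
        rw [hu, real_inner_smul_right, real_inner_comm]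
        have hinv : (0:ℝ) ≤ ‖x t - p t‖⁻¹ := by positivity
        exact mul_nonpos_of_nonneg_of_nonpos hinv (hproj' (p s) hps)
      have h3 : h s = ⟪x s - p s, u⟫ + ⟪p s - p t, u⟫ := by
        rw [hhdef]
        simp only []
        rw [← inner_add_left]
        congr 1
        abel
      rw [h3]; linarith
    -- slopes tendsto 0
    have hgW : HasDerivWithinAt g 0 (Set.Icc t₀ t₁) t := hg.hasDerivWithinAt
    have hhW : HasDerivWithinAt h 0 (Set.Icc t₀ t₁) t := hh.hasDerivWithinAt
    rw [hasDerivWithinAt_iff_tendsto_slope]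
    rw [hasDerivWithinAt_iff_tendsto_slope] at hgW hhW
    have hB : Filter.Tendsto (fun s => |slope g t s| + |slope h t s|)
        (nhdsWithin t (Set.Icc t₀ t₁ \ {t})) (nhds 0) := by
      have := (hgW.abs).add (hhW.abs)
      simpa using this
    have hBneg : Filter.Tendsto (fun s => -(|slope g t s| + |slope h t s|))
        (nhdsWithin t (Set.Icc t₀ t₁ \ {t})) (nhds 0) := by
      simpa using hB.neg
    have hsand : ∀ s ∈ Set.Icc t₀ t₁ \ {t},
        |slope f t s| ≤ |slope g t s| + |slope h t s| := by
      intro s hs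
      obtain ⟨hs1, hs2⟩ := hs
      have hne : s ≠ t := by simpa using hs2
      have hineq1 : f s - f t ≤ g s - g t := by
        have := hupper s hs1; rw [hgt]; linarith
      have hineq2 : h s - h t ≤ f s - f t := by
        have := hlower s hs1; rw [hht]; linarith
      have habs : |f s - f t| ≤ |g s - g t| + |h s - h t| := by
        have a1 := le_abs_self (g s - g t)
        have a2 := neg_abs_le (h s - h t)
        have a3 := abs_nonneg (g s - g t)
        have a4 := abs_nonneg (h s - h t)
        rw [abs_le]; constructor <;> linarith
      have hdpos : (0:ℝ) < |s - t| := abs_pos.2 (sub_ne_zero.2 hne)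
      rw [slope_def_field, slope_def_field, slope_def_field, abs_div, abs_div, abs_div,
        ← add_div]
      exact div_le_div_of_nonneg_right habs hdpos.le
    apply tendsto_of_tendsto_of_tendsto_of_le_of_le' hBneg hB
    · filter_upwards [self_mem_nhdsWithin] with s hs
      linarith [neg_abs_le (slope f t s), hsand s hs]
    · filter_upwards [self_mem_nhdsWithin] with s hs
      exact (le_abs_self _).trans (hsand s hs)
  -- conclude constancy
  have hcont : ContinuousOn f (Set.Icc t₀ t₁) := fun s hs =>
    (key s hs).continuousWithinAt
  have hderivR : ∀ s ∈ Set.Ico t₀ t₁, HasDerivWithinAt f 0 (Set.Ici s) s := by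
    intro s hs
    apply (key s ⟨hs.1, le_of_lt hs.2⟩).mono_of_mem_nhdsWithin
    have h1 : Set.Iio t₁ ∈ nhdsWithin s (Set.Ici s) :=
      mem_nhdsWithin_of_mem_nhds (Iio_mem_nhds hs.2)
    have h2 : Set.Iio t₁ ∩ Set.Ici s ⊆ Set.Icc t₀ t₁ := fun y hy =>
      ⟨hs.1.trans hy.2, le_of_lt hy.1⟩
    exact Filter.mem_of_superset (Filter.inter_mem h1 self_mem_nhdsWithin) h2
  exact constant_of_has_deriv_right_zero hcont hderivR
end

section
/- Let V be a nonempty, closed, convex subset of EuclideanSpace ℝ n, let q ∉ V, and let p ∈ V be the metric projection of q onto V. Then the distance function y ↦ infDist y V has a gradient at q (HasGradientAt), equal to (‖q − p‖)⁻¹ • (q − p), the outward unit normal to the sublevel set of the distance at q. -/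
open Metric InnerProductSpace

open scoped RealInnerProductSpace

set_option maxHeartbeats 800000

private lemma aux_real {d t m h : ℝ} (hd : 0 < d) (hm0 : 0 ≤ m)
    (ht1 : -h ≤ t) (ht2 : t ≤ h) (hh : h ≤ d / 2)
    (hmsq : m ^ 2 = d ^ 2 + 2 * (d * t) + h ^ 2) :
    m - (d + t) ≤ d⁻¹ * h ^ 2 := by
  have ha_pos : d / 2 ≤ d + t := by linarith
  have hm_ge : d + t ≤ m := by nlinarith [sq_nonneg (h - t), sq_nonneg (h + t)]
  have hgoal : d * (m - (d + t)) ≤ h ^ 2 := by nlinarith [sq_nonneg t]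
  have := mul_le_mul_of_nonneg_left hgoal (inv_nonneg.mpr hd.le)
  rw [← mul_assoc, inv_mul_cancel₀ hd.ne', one_mul] at this
  linarith

/-- The distance function to a nonempty closed convex set `V` is differentiable at every
exterior point `q`, with gradient the outward unit normal
`(‖q - p‖)⁻¹ • (q - p)`, where `p = Π(q, V)` is the metric projection of `q` onto `V`. -/
theorem hasGradientAt_infDist {n : ℕ} (V : Set (EuclideanSpace ℝ (Fin n)))
    (hVne : V.Nonempty) (hVcl : IsClosed V) (hVconv : Convex ℝ V)
    (q p : EuclideanSpace ℝ (Fin n)) (hq : q ∉ V) (hp : p ∈ V)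
    (hproj : ‖q - p‖ = infDist q V) :
    HasGradientAt (fun y => infDist y V) ((‖q - p‖)⁻¹ • (q - p)) q := by
  haveI : Nonempty V := hVne.to_subtype
  set d : ℝ := ‖q - p‖ with hd_def
  have hqp : q ≠ p := fun h => hq (h ▸ hp)
  have hd : 0 < d := by
    rw [hd_def, norm_pos_iff]
    exact sub_ne_zero_of_ne hqp
  set u : EuclideanSpace ℝ (Fin n) := d⁻¹ • (q - p) with hu_def
  have hu_norm : ‖u‖ = 1 := by
    rw [hu_def, norm_smul, norm_inv, Real.norm_of_nonneg hd.le, ← hd_def,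
      inv_mul_cancel₀ hd.ne']
  -- projection characterization
  have hiInf : ‖q - p‖ = ⨅ w : V, ‖q - w‖ := by
    rw [← hd_def, hproj, Metric.infDist_eq_iInf]
    simp_rw [dist_eq_norm]
  have hchar : ∀ w ∈ V, ⟪q - p, w - p⟫ ≤ 0 :=
    (norm_eq_iInf_iff_real_inner_le_zero hVconv hp).mp hiInf
  -- lower bound
  have hlow : ∀ y, ⟪u, y - p⟫ ≤ infDist y V := by
    intro y
    rw [Metric.infDist_eq_iInf]
    refine le_ciInf fun v => ?_
    have h1 : ⟪u, (v : EuclideanSpace ℝ (Fin n)) - p⟫ ≤ 0 := by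
      rw [hu_def, real_inner_smul_left]
      exact mul_nonpos_of_nonneg_of_nonpos (inv_nonneg.mpr hd.le) (hchar v v.2)
    have h2 : ⟪u, y - (v : EuclideanSpace ℝ (Fin n))⟫ ≤ ‖y - (v : EuclideanSpace ℝ (Fin n))‖ := by
      calc ⟪u, y - (v : EuclideanSpace ℝ (Fin n))⟫ ≤ ‖u‖ * ‖y - (v : EuclideanSpace ℝ (Fin n))‖ :=
            real_inner_le_norm _ _
        _ = _ := by rw [hu_norm, one_mul]
    have h3 : ⟪u, y - p⟫ = ⟪u, y - (v : EuclideanSpace ℝ (Fin n))⟫ +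
        ⟪u, (v : EuclideanSpace ℝ (Fin n)) - p⟫ := by
      rw [← inner_add_right]
      congr 1
      abel
    rw [dist_eq_norm]
    linarith
  have hupper : ∀ y, infDist y V ≤ ‖y - p‖ := fun y => by
    simpa [dist_eq_norm] using Metric.infDist_le_dist_of_mem (x := y) hp
  have huqp : ⟪u, q - p⟫ = d := by
    rw [hu_def, real_inner_smul_left, real_inner_self_eq_norm_sq, ← hd_def]
    field_simp
  -- key pointwise bound
  have key : ∀ y : EuclideanSpace ℝ (Fin n), ‖y - q‖ ≤ d / 2 →
      |infDist y V - infDist q V - ⟪u, y - q⟫| ≤ d⁻¹ * ‖y - q‖ ^ 2 := by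
    intro y hy
    set h : EuclideanSpace ℝ (Fin n) := y - q with hh_def
    set t := ⟪u, h⟫ with ht_def
    have hyp : y - p = (q - p) + h := by rw [hh_def]; abel
    have ha : ⟪u, y - p⟫ = d + t := by
      rw [hyp, inner_add_right, huqp, ht_def]
    have ht_abs : |t| ≤ ‖h‖ := by
      rw [ht_def]
      calc |⟪u, h⟫| ≤ ‖u‖ * ‖h‖ := abs_real_inner_le_norm _ _
        _ = ‖h‖ := by rw [hu_norm, one_mul]
    have hqph : ⟪q - p, h⟫ = d * t := by
      have h4 : t = d⁻¹ * ⟪q - p, h⟫ := by rw [ht_def, hu_def, real_inner_smul_left]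
      rw [h4, ← mul_assoc, mul_inv_cancel₀ hd.ne']
      try rw [one_mul]
    have hm_sq : ‖y - p‖ ^ 2 = d ^ 2 + 2 * (d * t) + ‖h‖ ^ 2 := by
      rw [hyp, norm_add_sq_real, ← hd_def, hqph]
      try ring
    have hlow' : (0:ℝ) ≤ infDist y V - infDist q V - t := by
      have := hlow y
      rw [ha] at this
      rw [← hproj]
      linarith
    have hup' : infDist y V - infDist q V - t ≤ d⁻¹ * ‖h‖ ^ 2 := by
      have h1 : infDist y V ≤ ‖y - p‖ := hupper y
      have h2 : ‖y - p‖ - (d + t) ≤ d⁻¹ * ‖h‖ ^ 2 :=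
        aux_real hd (norm_nonneg _) (neg_le_of_abs_le ht_abs) (le_of_abs_le ht_abs) hy hm_sq
      rw [← hproj]
      linarith
    rw [abs_le]
    exact ⟨by linarith, by linarith⟩
  -- conclude
  rw [hasGradientAt_iff_hasFDerivAt, hasFDerivAt_iff_isLittleO,
    Asymptotics.isLittleO_iff]
  intro c hc
  rw [Metric.eventually_nhds_iff]
  refine ⟨min (d / 2) (c * d), lt_min (by linarith) (by positivity), fun y hy => ?_⟩
  rw [dist_eq_norm] at hy
  have hy1 : ‖y - q‖ ≤ d / 2 := le_of_lt (lt_of_lt_of_le hy (min_le_left _ _))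
  have hy2 : ‖y - q‖ ≤ c * d := le_of_lt (lt_of_lt_of_le hy (min_le_right _ _))
  have hk := key y hy1
  have htD : (toDual ℝ (EuclideanSpace ℝ (Fin n)) u) (y - q) = ⟪u, y - q⟫ := rfl
  rw [Real.norm_eq_abs]
  calc |infDist y V - infDist q V - (toDual ℝ (EuclideanSpace ℝ (Fin n)) u) (y - q)|
      = |infDist y V - infDist q V - ⟪u, y - q⟫| := by rw [htD]
    _ ≤ d⁻¹ * ‖y - q‖ ^ 2 := hk
    _ ≤ d⁻¹ * ((c * d) * ‖y - q‖) := by rw [sq]; gcongr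
    _ = c * ‖y - q‖ := by field_simp
end

section
/- Let m ∈ {−1, 1}, let x, p ∈ ℝ² with x ≠ p, let κ ∈ [0, 1] and γ > 0. If ⟪x, x − p⟫ ≥ 0, then ⟪−γ·κ • x + γ·(1 − κ) • ((‖x‖/‖x − p‖) • ν_m(x − p)), ν_m(x)⟫ ≥ 0; that is, the obstacle-avoidance control vector lies in the closed half-space with inward normal ν_m(x). -/
open Metric
open scoped RealInnerProductSpace

/-- Inequality from the proof of Lemma 4 of the paper: outside the back region
(`⟪x, x − p⟫ ≥ 0`), the obstacle-avoidance control
`u = −γκ • x + γ(1−κ) • ((‖x‖/‖x−p‖) • ν_m(x−p))` lies in the closed half-space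
with inward normal `ν_m(x)`. -/
theorem control_in_half_space (m : ℝ) (hm : m = -1 ∨ m = 1)
    (x p : EuclideanSpace ℝ (Fin 2)) (hxp : x ≠ p)
    (κ γ : ℝ) (hκ0 : 0 ≤ κ) (hκ1 : κ ≤ 1) (hγ : 0 < γ)
    (hback : 0 ≤ ⟪x, x - p⟫) :
    0 ≤ ⟪(-(γ * κ)) • x + (γ * (1 - κ)) • ((‖x‖ / ‖x - p‖) • nu m (x - p)), nu m x⟫ := by
  have hc : (0:ℝ) ≤ ‖x‖ / ‖x - p‖ := by positivity
  have hm2 : m * m = 1 := by rcases hm with h | h <;> simp [h]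
  simp only [PiLp.inner_apply, RCLike.inner_apply, conj_trivial, Fin.sum_univ_two,
    PiLp.add_apply, PiLp.smul_apply, PiLp.sub_apply, nu, PiLp.toLp_apply, smul_eq_mul,
    Matrix.cons_val_zero, Matrix.cons_val_one, Matrix.head_cons] at hback ⊢
  nlinarith [mul_nonneg (mul_nonneg (mul_nonneg hγ.le (sub_nonneg.2 hκ1)) hc) hback]
end

section
/- Let m ∈ {−1, 1}, let x ∈ ℝ² with x ≠ 0, let c > 0, and let p ∈ ℝ² satisfy x − p = c • ν_m(x) (i.e., x lies in the gate region: the normal x − p is the −mπ/2 rotation of x up to positive scaling). Then (‖x‖/‖x − p‖) • ν_m(x − p) = −x. Consequently, for any κ ∈ ℝ and γ > 0, the control −γ·κ • x + γ·(1 − κ) • ((‖x‖/‖x − p‖) • ν_m(x − p)) equals −γ • x. -/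
open Metric
open scoped RealInnerProductSpace

lemma nu_apply0 (m : ℝ) (w : EuclideanSpace ℝ (Fin 2)) : nu m w 0 = m * w 1 := rfl
lemma nu_apply1 (m : ℝ) (w : EuclideanSpace ℝ (Fin 2)) : nu m w 1 = -(m * w 0) := rfl

lemma nu_smul (m c : ℝ) (w : EuclideanSpace ℝ (Fin 2)) :
    nu m (c • w) = c • nu m w := by
  ext i
  fin_cases i <;>
    simp [nu_apply0, nu_apply1, PiLp.smul_apply, smul_eq_mul] <;> ring

lemma nu_nu (m : ℝ) (hm : m = -1 ∨ m = 1) (w : EuclideanSpace ℝ (Fin 2)) :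
    nu m (nu m w) = -w := by
  have hm2 : m * m = 1 := by rcases hm with h | h <;> simp [h]
  ext i
  fin_cases i <;> · simp [nu]; rw [← mul_assoc, hm2, one_mul]

lemma norm_nu (m : ℝ) (hm : m = -1 ∨ m = 1) (w : EuclideanSpace ℝ (Fin 2)) :
    ‖nu m w‖ = ‖w‖ := by
  have hm2 : m * m = 1 := by rcases hm with h | h <;> simp [h]
  rw [EuclideanSpace.norm_eq, EuclideanSpace.norm_eq]
  congr 1
  rw [Fin.sum_univ_two, Fin.sum_univ_two, nu_apply0, nu_apply1]
  simp only [Real.norm_eq_abs, sq_abs, abs_neg]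
  nlinarith [hm2]

/-- Crux of Proposition 1 of the paper: at a gate point (where the normal `x − p` is the
`−mπ/2` rotation `c • ν_m(x)` of `x`, `c > 0`), the rotational vector
`(‖x‖/‖x−p‖) • ν_m(x−p)` equals `−x`, and hence the obstacle-avoidance control
`−γκ • x + γ(1−κ) • ((‖x‖/‖x−p‖) • ν_m(x−p))` equals the stabilizing control `−γ • x`. -/
theorem gate_region_control_continuity (m : ℝ) (hm : m = -1 ∨ m = 1)
    (x p : EuclideanSpace ℝ (Fin 2)) (hx : x ≠ 0)
    (c : ℝ) (hc : 0 < c) (hgate : x - p = c • nu m x) :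
    (‖x‖ / ‖x - p‖) • nu m (x - p) = -x ∧
      ∀ κ γ : ℝ, 0 < γ →
        (-(γ * κ)) • x + (γ * (1 - κ)) • ((‖x‖ / ‖x - p‖) • nu m (x - p)) = -(γ • x) := by
  have hxn : ‖x‖ ≠ 0 := norm_ne_zero_iff.mpr hx
  have hnorm : ‖x - p‖ = c * ‖x‖ := by
    rw [hgate, norm_smul, norm_nu m hm, Real.norm_eq_abs, abs_of_pos hc]
  have hmain : (‖x‖ / ‖x - p‖) • nu m (x - p) = -x := by
    rw [hnorm, hgate, nu_smul, nu_nu m hm]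
    have : ‖x‖ / (c * ‖x‖) = 1 / c := by
      field_simp
    rw [this]
    match_scalars
    field_simp
  refine ⟨hmain, fun κ γ hγ => ?_⟩
  rw [hmain]
  module
end

section
/- Let O ⊆ ℝ² be a nonempty, compact, convex set, let m ∈ {−1, 1}, and let γ > 0, r_a > 0, 0 < ε < ε_s. Then the obstacle-avoidance control map x ↦ u(x, m) = −γ·κ(x) • x + γ·(1 − κ(x)) • v(x, m) is continuous on the complement {x ∈ ℝ² : x ∉ O} of the obstacle. -/
open Metric
open scoped RealInnerProductSpace

theorem nu_continuous (m : ℝ) : Continuous (nu m) := by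
  have h0 : Continuous fun w : EuclideanSpace ℝ (Fin 2) => w 0 :=
    (EuclideanSpace.proj (0 : Fin 2)).continuous
  have h1 : Continuous fun w : EuclideanSpace ℝ (Fin 2) => w 1 :=
    (EuclideanSpace.proj (1 : Fin 2)).continuous
  have : Continuous fun w : EuclideanSpace ℝ (Fin 2) =>
      (EuclideanSpace.equiv (Fin 2) ℝ).symm ![m * w 1, -(m * w 0)] := by
    apply Continuous.comp (EuclideanSpace.equiv (Fin 2) ℝ).symm.continuous
    apply continuous_pi
    intro i
    fin_cases i <;> simp <;> fun_prop
  exact this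

/-- Hybrid basic conditions (Appendix A of the paper): the obstacle-avoidance control
`u(x, m) = −γκ(x) • x + γ(1 − κ(x)) • v(x, m)` is continuous on the complement of the
obstacle, where `κ(x) = η(infDist x O − r_a)` with the piecewise-linear switching
function `η`, and `v(x, m) = (‖x‖/‖x − Π(x,O)‖) • ν_m(x − Π(x,O))`. -/
theorem obstacle_avoidance_control_continuous
    (O : Set (EuclideanSpace ℝ (Fin 2)))
    (hOne : O.Nonempty) (hOcomp : IsCompact O) (hOconv : Convex ℝ O)
    (m γ r_a ε ε_s : ℝ) (hm : m = -1 ∨ m = 1)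
    (hγ : 0 < γ) (hra : 0 < r_a) (hε : 0 < ε) (hεs : ε < ε_s)
    (proj : EuclideanSpace ℝ (Fin 2) → EuclideanSpace ℝ (Fin 2))
    (hproj : ∀ q, proj q ∈ O ∧ ‖q - proj q‖ = infDist q O)
    (η : ℝ → ℝ)
    (hη₀ : ∀ s, s ≤ ε → η s = 0)
    (hη₁ : ∀ s, ε ≤ s → s ≤ ε_s → η s = (s - ε) / (ε_s - ε))
    (hη₂ : ∀ s, ε_s ≤ s → η s = 1)
    (κ : EuclideanSpace ℝ (Fin 2) → ℝ)
    (hκ : ∀ x, κ x = η (infDist x O - r_a))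
    (v : EuclideanSpace ℝ (Fin 2) → EuclideanSpace ℝ (Fin 2))
    (hv : ∀ x, v x = (‖x‖ / ‖x - proj x‖) • nu m (x - proj x))
    (u : EuclideanSpace ℝ (Fin 2) → EuclideanSpace ℝ (Fin 2))
    (hu : ∀ x, u x = (-(γ * κ x)) • x + (γ * (1 - κ x)) • v x) :
    ContinuousOn u {x : EuclideanSpace ℝ (Fin 2) | x ∉ O} := by
  haveI : Nonempty O := hOne.to_subtype
  -- variational inequality
  have hvar : ∀ q, ∀ w ∈ O, ⟪q - proj q, w - proj q⟫ ≤ 0 := by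
    intro q
    refine (norm_eq_iInf_iff_real_inner_le_zero hOconv (hproj q).1).mp ?_
    rw [(hproj q).2, infDist_eq_iInf]
    simp only [dist_eq_norm]
  -- the projection is nonexpansive, hence continuous
  have hlip : ∀ p q, ‖proj p - proj q‖ ≤ ‖p - q‖ := by
    intro p q
    have h1 := hvar p (proj q) (hproj q).1
    have h2 := hvar q (proj p) (hproj p).1
    have key : ‖proj p - proj q‖ ^ 2 ≤ ⟪p - q, proj p - proj q⟫ := by
      have e : ⟪p - q, proj p - proj q⟫ - ‖proj p - proj q‖ ^ 2 =
          (-⟪p - proj p, proj q - proj p⟫) + (-⟪q - proj q, proj p - proj q⟫) := by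
        rw [← real_inner_self_eq_norm_sq]
        simp only [inner_sub_left, inner_sub_right]
        ring
      nlinarith [h1, h2, e]
    have hi := real_inner_le_norm (p - q) (proj p - proj q)
    nlinarith [norm_nonneg (proj p - proj q), norm_nonneg (p - q)]
  have hprojc : Continuous proj := by
    refine (LipschitzWith.of_dist_le_mul (K := 1) fun p q => ?_).continuous
    simpa [dist_eq_norm] using hlip p q
  -- η is continuous
  have hηeq : η = fun s => max 0 (min 1 ((s - ε) / (ε_s - ε))) := by
    have hd : (0:ℝ) < ε_s - ε := by linarith
    funext s
    rcases le_total s ε with h | h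
    · rw [hη₀ s h]
      have : (s - ε) / (ε_s - ε) ≤ 0 := div_nonpos_of_nonpos_of_nonneg (by linarith) hd.le
      rw [min_eq_right (by linarith), max_eq_left this]
    · rcases le_total s ε_s with h' | h'
      · rw [hη₁ s h h']
        have h0 : 0 ≤ (s - ε) / (ε_s - ε) := div_nonneg (by linarith) hd.le
        have h1 : (s - ε) / (ε_s - ε) ≤ 1 := by
          rw [div_le_one hd]; linarith
        rw [min_eq_right h1, max_eq_right h0]
      · rw [hη₂ s h']
        have : (1:ℝ) ≤ (s - ε) / (ε_s - ε) := by
          rw [le_div_iff₀ hd]; linarith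
        rw [min_eq_left this, max_eq_right zero_le_one]
  have hηc : Continuous η := by
    rw [hηeq]
    have : (ε_s - ε) ≠ 0 := by intro h; linarith [sub_eq_zero.mp h]
    fun_prop (disch := assumption)
  have hκc : Continuous κ := by
    have : κ = fun x => η (infDist x O - r_a) := funext hκ
    rw [this]
    exact hηc.comp ((continuous_infDist_pt O).sub continuous_const)
  -- on the complement, x ≠ proj x
  have hne : ∀ x ∈ {x : EuclideanSpace ℝ (Fin 2) | x ∉ O}, ‖x - proj x‖ ≠ 0 := by
    intro x hx h
    rw [norm_eq_zero, sub_eq_zero] at h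
    exact hx (h ▸ (hproj x).1)
  have hvc : ContinuousOn v {x : EuclideanSpace ℝ (Fin 2) | x ∉ O} := by
    have : v = fun x => (‖x‖ / ‖x - proj x‖) • nu m (x - proj x) := funext hv
    rw [this]
    apply ContinuousOn.fun_smul
    · exact (continuous_norm.continuousOn).div
        ((continuous_id.sub hprojc).norm.continuousOn) hne
    · exact ((nu_continuous m).comp (continuous_id.sub hprojc)).continuousOn
  have : u = fun x => (-(γ * κ x)) • x + (γ * (1 - κ x)) • v x := funext hu
  rw [this]
  exact (((hκc.fun_mul continuous_const).fun_neg.continuousOn.congr (fun x _ => by ring_nf)).fun_smul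
    continuous_id.continuousOn).fun_add (((continuous_const.fun_mul
    (continuous_const.fun_sub hκc)).continuousOn).fun_smul hvc)
end
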